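/- The function T(t,x,p) := 2 e^{−2σ(x)} 𝒫^{1/2} Σ₁₁ + (3/4) h¹¹(t) e^{2σ(x)} 𝒫^{−1/2} satisfies the first geometrical conservation-like law ∂T/∂t − κ¹₁₁(t) Σ_{r=1}^{4} p_r ∂T/∂p_r = 0, where Σ₁₁ := Σ_{1 ≤ i < j ≤ 4} σ_{ij}(x)/(p_i p_j). -/

import Mathlib

/-- Partial derivative of `f : (Fin 4 → ℝ) → ℝ` with respect to the `i`-th coordinate. -/
noncomputable def pd (f : (Fin 4 → ℝ) → ℝ) (i : Fin 4) (v : Fin 4 → ℝ) : ℝ :=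
  deriv (fun s => f (Function.update v i s)) (v i)

/-- `σ_{ij} = ∂²σ/∂x^i∂x^j`. -/
noncomputable def sig2 (σ : (Fin 4 → ℝ) → ℝ) (x : Fin 4 → ℝ) (i j : Fin 4) : ℝ :=
  pd (fun x' => pd σ i x') j x

/-- `Σ₁₁ = Σ_{i<j} σ_{ij}(x)/(p_i p_j)`. -/
noncomputable def sig11 (σ : (Fin 4 → ℝ) → ℝ) (x p : Fin 4 → ℝ) : ℝ :=
  ∑ i, ∑ j, if i < j then sig2 σ x i j / (p i * p j) else 0

/-- `T(t,x,p) = 2 e^{−2σ(x)} 𝒫^{1/2} Σ₁₁ + (3/4) h¹¹(t) e^{2σ(x)} 𝒫^{−1/2}`. -/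
noncomputable def Tf (σ : (Fin 4 → ℝ) → ℝ) (h : ℝ → ℝ) (x : Fin 4 → ℝ) (t : ℝ)
    (p : Fin 4 → ℝ) : ℝ :=
  2 * Real.exp (-2 * σ x) * Real.sqrt (∏ k, p k) * sig11 σ x p
    + 3 / 4 * (h t)⁻¹ * Real.exp (2 * σ x) / Real.sqrt (∏ k, p k)

/-- The part of `Σ₁₁` consisting of pairs containing `r`. -/
noncomputable def Wf (σ : (Fin 4 → ℝ) → ℝ) (x p : Fin 4 → ℝ) (r : Fin 4) : ℝ :=
  ∑ i, ∑ j, if i < j ∧ (i = r ∨ j = r) then sig2 σ x i j / (p i * p j) else 0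

lemma sumW (σ : (Fin 4 → ℝ) → ℝ) (x p : Fin 4 → ℝ) :
    ∑ r, Wf σ x p r = 2 * sig11 σ x p := by
  unfold Wf sig11
  rw [Finset.sum_comm]
  rw [show (∑ i : Fin 4, ∑ r : Fin 4, ∑ j : Fin 4,
      if i < j ∧ (i = r ∨ j = r) then sig2 σ x i j / (p i * p j) else 0)
      = ∑ i : Fin 4, ∑ j : Fin 4, ∑ r : Fin 4,
      (if i < j ∧ (i = r ∨ j = r) then sig2 σ x i j / (p i * p j) else 0) from
    Finset.sum_congr rfl fun i _ => Finset.sum_comm]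
  rw [Finset.mul_sum]
  refine Finset.sum_congr rfl fun i _ => ?_
  rw [Finset.mul_sum]
  refine Finset.sum_congr rfl fun j _ => ?_
  by_cases hij : i < j
  · have hne : i ≠ j := hij.ne
    have hsplit : ∀ r : Fin 4, (if i < j ∧ (i = r ∨ j = r) then sig2 σ x i j / (p i * p j) else 0)
        = (if i = r then sig2 σ x i j / (p i * p j) else 0)
          + (if j = r then sig2 σ x i j / (p i * p j) else 0) := by
      intro r
      by_cases h1 : i = r <;> by_cases h2 : j = r <;> simp_all
    rw [Finset.sum_congr rfl fun r _ => hsplit r, Finset.sum_add_distrib,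
      Finset.sum_ite_eq, Finset.sum_ite_eq]
    simp [hij, two_mul]
  · simp [hij]

lemma deriv_aux (A B S0 S1 C s0 : ℝ) (hs0 : 0 < s0) (hC : 0 < C) :
    HasDerivAt (fun s : ℝ => A * Real.sqrt (s * C) * (S0 + S1 / s) + B / Real.sqrt (s * C))
      (A * (C / (2 * Real.sqrt (s0 * C))) * (S0 + S1 / s0)
        + A * Real.sqrt (s0 * C) * (-(S1 / s0 ^ 2))
        + B * (-(C / (2 * Real.sqrt (s0 * C))) / Real.sqrt (s0 * C) ^ 2)) s0 := by
  have hsc : 0 < s0 * C := mul_pos hs0 hC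
  have h1 : HasDerivAt (fun s : ℝ => s * C) C s0 := by
    simpa using (hasDerivAt_id s0).mul_const C
  have h2 : HasDerivAt (fun s : ℝ => Real.sqrt (s * C)) (C / (2 * Real.sqrt (s0 * C))) s0 :=
    h1.sqrt hsc.ne'
  have h3 : HasDerivAt (fun s : ℝ => S0 + S1 / s) (-(S1 / s0 ^ 2)) s0 := by
    have h3' := ((hasDerivAt_inv hs0.ne').const_mul S1)
    have h3'' := (hasDerivAt_const s0 S0).add h3'
    simpa [div_eq_mul_inv, mul_comm] using h3'
  have hQ : Real.sqrt (s0 * C) ≠ 0 := (Real.sqrt_pos.mpr hsc).ne'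
  have h4 := (h2.const_mul A).mul h3
  have h5 : HasDerivAt (fun s : ℝ => B / Real.sqrt (s * C))
      (B * (-(C / (2 * Real.sqrt (s0 * C))) / Real.sqrt (s0 * C) ^ 2)) s0 := by
    have := (h2.inv hQ).const_mul B
    simpa [div_eq_mul_inv] using this
  exact h4.add h5

lemma key (σ : (Fin 4 → ℝ) → ℝ) (x p : Fin 4 → ℝ) (hp : ∀ i, 0 < p i) (r : Fin 4) (A B : ℝ) :
    p r * pd (fun p' => A * Real.sqrt (∏ k, p' k) * sig11 σ x p'
        + B / Real.sqrt (∏ k, p' k)) r p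
    = A * Real.sqrt (∏ k, p k) / 2 * (sig11 σ x p - 2 * Wf σ x p r)
      - B / (2 * Real.sqrt (∏ k, p k)) := by
  have hs0 : 0 < p r := hp r
  have hC : 0 < ∏ k ∈ Finset.univ.erase r, p k :=
    Finset.prod_pos fun i _ => hp i
  set C := ∏ k ∈ Finset.univ.erase r, p k with hCdef
  have hP : ∏ k, p k = p r * C := (Finset.mul_prod_erase _ _ (Finset.mem_univ r)).symm
  have hupd : ∀ s : ℝ, ∏ k, Function.update p r s k = s * C := fun s => by
    rw [Finset.prod_update_of_mem (Finset.mem_univ r), Finset.sdiff_singleton_eq_erase]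
  set S0 : ℝ := ∑ i, ∑ j, if i < j ∧ ¬(i = r ∨ j = r)
    then sig2 σ x i j / (p i * p j) else 0 with hS0def
  set S1 : ℝ := ∑ i, ∑ j, if i < j ∧ (i = r ∨ j = r)
    then sig2 σ x i j * p r / (p i * p j) else 0 with hS1def
  have hsig : ∀ s : ℝ, sig11 σ x (Function.update p r s) = S0 + S1 / s := by
    intro s
    rw [hS0def, hS1def, Finset.sum_div, ← Finset.sum_add_distrib]
    unfold sig11
    refine Finset.sum_congr rfl fun i _ => ?_
    rw [Finset.sum_div, ← Finset.sum_add_distrib]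
    refine Finset.sum_congr rfl fun j _ => ?_
    simp only [Function.update_apply]
    by_cases hij : i < j
    · by_cases hir : i = r
      · have hjr : ¬ j = r := fun e => hij.ne (hir.trans e.symm)
        have hrj : r < j := hir.symm.trans_lt hij
        simp only [hij, hir, hjr, hrj, if_true, if_false, true_and, true_or, not_true,
          eq_self_iff_true, zero_add, or_false]
        by_cases hs : s = 0
        · simp [hs]
        · field_simp
      · by_cases hjr : j = r
        · have hir' : i < r := hij.trans_eq hjr
          simp only [hij, hir, hjr, hir', if_true, if_false, true_and, or_true, not_true,
            eq_self_iff_true, zero_add, if_neg hir]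
          by_cases hs : s = 0
          · simp [hs]
          · field_simp
        · simp [hij, hir, hjr]
    · simp [hij]
  have hW : Wf σ x p r = S1 / p r := by
    rw [hS1def]
    unfold Wf
    rw [Finset.sum_div]
    refine Finset.sum_congr rfl fun i _ => ?_
    rw [Finset.sum_div]
    refine Finset.sum_congr rfl fun j _ => ?_
    split_ifs with hc
    · rw [div_div, mul_div_mul_right _ _ (hp r).ne']
    · rw [zero_div]
  have hfun : (fun s : ℝ => A * Real.sqrt (∏ k, Function.update p r s k)
        * sig11 σ x (Function.update p r s)
        + B / Real.sqrt (∏ k, Function.update p r s k))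
      = fun s : ℝ => A * Real.sqrt (s * C) * (S0 + S1 / s) + B / Real.sqrt (s * C) := by
    funext s
    rw [hupd s, hsig s]
  have hpd : pd (fun p' => A * Real.sqrt (∏ k, p' k) * sig11 σ x p'
      + B / Real.sqrt (∏ k, p' k)) r p
      = A * (C / (2 * Real.sqrt (p r * C))) * (S0 + S1 / p r)
        + A * Real.sqrt (p r * C) * (-(S1 / p r ^ 2))
        + B * (-(C / (2 * Real.sqrt (p r * C))) / Real.sqrt (p r * C) ^ 2) := by
    unfold pd
    rw [show (fun s : ℝ => A * Real.sqrt (∏ k, Function.update p r s k)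
        * sig11 σ x (Function.update p r s)
        + B / Real.sqrt (∏ k, Function.update p r s k))
      = fun s : ℝ => A * Real.sqrt (s * C) * (S0 + S1 / s) + B / Real.sqrt (s * C) from hfun]
    exact (deriv_aux A B S0 S1 C (p r) hs0 hC).deriv
  have hsigp : sig11 σ x p = S0 + S1 / p r := by
    have := hsig (p r)
    rwa [Function.update_eq_self] at this
  rw [hpd, hP, hsigp, hW]
  have hQpos : 0 < Real.sqrt (p r * C) := Real.sqrt_pos.mpr (mul_pos hs0 hC)
  have hQ2 : Real.sqrt (p r * C) ^ 2 = p r * C := Real.sq_sqrt (mul_pos hs0 hC).le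
  have hCQ : C = Real.sqrt (p r * C) ^ 2 / p r := by
    rw [hQ2]; field_simp
  rw [hCQ]
  field_simp
  simp only [Real.sqrt_sq hQpos.le]
  ring

/-- the first geometrical conservation-like law
`∂T/∂t − κ¹₁₁(t) Σ_r p_r ∂T/∂p_r = 0`, with `κ¹₁₁ = (h¹¹/2) dh₁₁/dt`. -/
theorem stmt_16 (σ : (Fin 4 → ℝ) → ℝ) (hσ : ContDiff ℝ (⊤ : ℕ∞) σ)
    (h : ℝ → ℝ) (hh : ContDiff ℝ (⊤ : ℕ∞) h) (hhpos : ∀ t, 0 < h t)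
    (t : ℝ) (x p : Fin 4 → ℝ) (hp : ∀ i, 0 < p i) :
    deriv (fun s => Tf σ h x s p) t
      - (((h t)⁻¹ / 2) * deriv h t) * ∑ r, p r * pd (fun p' => Tf σ h x t p') r p
    = 0 := by
  have hPpos : 0 < ∏ k, p k := Finset.prod_pos fun i _ => hp i
  have hSP : 0 < Real.sqrt (∏ k, p k) := Real.sqrt_pos.mpr hPpos
  -- the t-derivative
  have hdt : HasDerivAt (fun s => Tf σ h x s p)
      (3 / 4 * (-(deriv h t) / (h t) ^ 2) * Real.exp (2 * σ x) / Real.sqrt (∏ k, p k)) t := by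
    have hd : HasDerivAt h (deriv h t) t := (hh.differentiable (by simp) t).hasDerivAt
    have h1 := (((hd.inv (hhpos t).ne').const_mul (3 / 4 : ℝ)).mul_const
      (Real.exp (2 * σ x))).div_const (Real.sqrt (∏ k, p k))
    have h2 := (hasDerivAt_const t
      (2 * Real.exp (-2 * σ x) * Real.sqrt (∏ k, p k) * sig11 σ x p)).add h1
    simpa [Tf] using h1
  have ht' : deriv (fun s => Tf σ h x s p) t
      = 3 / 4 * (-(deriv h t) / (h t) ^ 2) * Real.exp (2 * σ x) / Real.sqrt (∏ k, p k) :=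
    hdt.deriv
  -- each momentum term
  have hkey : ∀ r : Fin 4, p r * pd (fun p' => Tf σ h x t p') r p
      = (2 * Real.exp (-2 * σ x)) * Real.sqrt (∏ k, p k) / 2
          * (sig11 σ x p - 2 * Wf σ x p r)
        - (3 / 4 * (h t)⁻¹ * Real.exp (2 * σ x)) / (2 * Real.sqrt (∏ k, p k)) := by
    intro r
    have hfe : (fun p' => Tf σ h x t p')
        = fun p' => (2 * Real.exp (-2 * σ x)) * Real.sqrt (∏ k, p' k) * sig11 σ x p'
          + (3 / 4 * (h t)⁻¹ * Real.exp (2 * σ x)) / Real.sqrt (∏ k, p' k) := by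
      funext p'
      simp only [Tf]
    rw [hfe]
    exact key σ x p hp r _ _
  have hsum : ∑ r, p r * pd (fun p' => Tf σ h x t p') r p
      = -(3 / 2 * (h t)⁻¹ * Real.exp (2 * σ x) / Real.sqrt (∏ k, p k)) := by
    rw [Finset.sum_congr rfl fun r _ => hkey r, Finset.sum_sub_distrib,
      ← Finset.mul_sum, Finset.sum_sub_distrib, Finset.sum_const, ← Finset.mul_sum,
      sumW σ x p, Finset.sum_const]
    simp only [Finset.card_univ, Fintype.card_fin, nsmul_eq_mul, Nat.cast_ofNat]
    field_simp [(hhpos t).ne', hSP.ne']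
    ring
  rw [ht', hsum]
  field_simp [(hhpos t).ne', hSP.ne']
  ring
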